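/- Let F be a field and 2k ≤ n. Then FΩ_k decomposes as a direct sum of F-vector spaces FΩ_k = FΩ_k^{>0} ⊕ S^{k,k}, where FΩ_k^{>0} is spanned by the k-subsets with positive threshold and S^{k,k} is the Specht module spanned by the polytabloids e_t over all (n−k,k)-tableaux t. -/

import Mathlib

/-- The density `d^ω_i = |ω ∩ {1,...,2i-1}|`. -/
def dens (ω : Finset ℕ) (i : ℕ) : ℕ := (ω ∩ Finset.Icc 1 (2 * i - 1)).card

/-- The threshold of `ω`: `max({0} ∪ {i ∈ {1,...,m} : d^ω_i = i})`, `m = ⌊n/2⌋+1`. -/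
def threshold (n : ℕ) (ω : Finset ℕ) : ℕ :=
  ((Finset.Icc 1 (n / 2 + 1)).filter fun i => dens ω i = i).sup id

/-- `a`, `b` encode an `(n−k,k)`-tableau `t`: `a j` is the entry of the first row in
column `j` (0-indexed, `j < n−k`), `b j` the entry of the second row in column `j`,
and all entries together enumerate `{1,...,n}` bijectively. -/
def IsTableau (n k : ℕ) (a : ℕ → ℕ) (b : Fin k → ℕ) : Prop :=
  Set.InjOn a (Set.Iio (n - k)) ∧ Function.Injective b ∧
  (∀ j : Fin k, ∀ j' < n - k, b j ≠ a j') ∧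
  ((Finset.range (n - k)).image a ∪ Finset.univ.image b) = Finset.Icc 1 n

/-- The polytabloid `e_t = {t}·κ_t`: the signed sum over the column stabilizer (a
subset `ε` of the `k` full columns records which columns are swapped) of the
resulting second-row `k`-subsets. -/
noncomputable def polytabloid (F : Type) [Field F] (k : ℕ) (a : ℕ → ℕ) (b : Fin k → ℕ) :
    Finset ℕ →₀ F :=
  ∑ ε : Finset (Fin k), ((-1 : F) ^ ε.card) •
    Finsupp.single ((Finset.univ : Finset (Fin k)).image fun j =>
      if j ∈ ε then a j.val else b j) (1 : F)

/-!
The polytabloid of a tableau with columns `(a j, b j)` is the image of the polynomial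
`∏ j, (X (b j) - X (a j))` under the linear map sending a monomial to its support. Expanding
the product, a tableau with `a j < b j` in every column has polytabloid equal to its second row
plus `k`-subsets of smaller sum. For `ω` of threshold zero, pairing the `j`-th element of `ω` with
the `j`-th element of its complement gives such a tableau, so induction on the sum shows that
`FΩ_k^{>0} + S^{k,k}` is all of `FΩ_k`.

For directness we bound `dim S^{k,k}`. The identities `y - x = (y - z) - (x - z)` and
`(d - a)(c - b) = (c - a)(d - b) - (b - a)(d - c)` rewrite every product of differences over a
matching into products over matchings with no unused value below a first entry and no nested
pairs. Such a matching is determined by its second row (its first entries are forced by rank), and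
that second row has threshold zero. Hence `dim S^{k,k}` is at most the number of threshold-zero
`k`-subsets, and the dimension count forces `FΩ_k^{>0} ∩ S^{k,k} = 0`.
-/

section

open Finset hiding dens
open MvPolynomial

/-! ### Threshold zero and standard tableaux -/

lemma dens_succ_le (ω : Finset ℕ) (i : ℕ) : dens ω (i + 1) ≤ dens ω i + 2 := by
  unfold dens
  calc #(ω ∩ Icc 1 (2 * (i + 1) - 1))
      ≤ #(ω ∩ Icc 1 (2 * i - 1) ∪ Icc (2 * i) (2 * i + 1)) := by
        refine card_le_card fun x hx => ?_
        simp only [mem_inter, mem_Icc, mem_union] at hx ⊢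
        grind
    _ ≤ #(ω ∩ Icc 1 (2 * i - 1)) + 2 := (card_union_le _ _).trans (by simp; omega)

lemma threshold_eq_zero_iff {n : ℕ} {ω : Finset ℕ} :
    threshold n ω = 0 ↔ ∀ i, 1 ≤ i → i ≤ n / 2 + 1 → dens ω i ≠ i := by
  simp only [threshold, sup_eq_zero, mem_filter, mem_Icc, id_eq, and_imp]
  exact forall_congr' fun i => by grind

lemma dens_lt_of_threshold_eq_zero {n : ℕ} {ω : Finset ℕ} (h : threshold n ω = 0) {i : ℕ}
    (hi : 1 ≤ i) (hin : i ≤ n / 2 + 1) : dens ω i < i := by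
  rw [threshold_eq_zero_iff] at h
  induction i, hi using Nat.le_induction with
  | base =>
    have : dens ω 1 ≤ 1 := (card_le_card inter_subset_right).trans (by simp)
    have := h 1 le_rfl (by omega)
    omega
  | succ i hi ih =>
    have := dens_succ_le ω i
    have := ih (by omega)
    have := h (i + 1) (by omega) hin
    omega

lemma count_mem_eq_card_filter_lt (s : Finset ℕ) (m : ℕ) :
    Nat.count (· ∈ s) m = #(s.filter (· < m)) := by
  rw [Nat.count_eq_card_filter_range]
  congr 1
  ext
  simp [and_comm]

lemma dens_eq_count {ω : Finset ℕ} (h0 : 0 ∉ ω) (i : ℕ) :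
    dens ω i = Nat.count (· ∈ ω) (2 * i) := by
  rw [count_mem_eq_card_filter_lt, dens]
  congr 1
  ext x
  have : x ∈ ω → x ≠ 0 := fun hx h => h0 (h ▸ hx)
  simp only [mem_inter, mem_Icc, mem_filter]
  grind

section Nth

variable (s : Finset ℕ)

lemma card_toFinset_ofPred_mem (hf : (Set.ofPred (· ∈ s)).Finite) : #hf.toFinset = #s := by
  simp

lemma nth_mem_finset {i : ℕ} (hi : i < #s) : Nat.nth (· ∈ s) i ∈ s :=
  Nat.nth_mem i fun hf => (card_toFinset_ofPred_mem s hf).symm ▸ hi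

lemma count_nth_finset {i : ℕ} (hi : i < #s) : Nat.count (· ∈ s) (Nat.nth (· ∈ s) i) = i :=
  Nat.count_nth fun hf => (card_toFinset_ofPred_mem s hf).symm ▸ hi

lemma injOn_nth_finset : (Set.Iio #s).InjOn (Nat.nth (· ∈ s)) := by
  simpa using Nat.nth_injOn (p := (· ∈ s)) s.finite_toSet

lemma image_nth_range_card : (range #s).image (Nat.nth (· ∈ s)) = s := by
  ext x
  simp only [mem_image, mem_range]
  refine ⟨fun ⟨i, hi, hx⟩ => hx ▸ nth_mem_finset s hi, fun hx => ?_⟩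
  simpa using Nat.exists_lt_card_finite_nth_eq (p := (· ∈ s)) s.finite_toSet hx

lemma image_nth_univ_fin {k : ℕ} (hk : #s = k) :
    univ.image (fun j : Fin k => Nat.nth (· ∈ s) j) = s := by
  subst hk
  calc _ = (range #s).image (Nat.nth (· ∈ s)) := by ext; simp [Fin.exists_iff]
    _ = s := image_nth_range_card s

end Nth

lemma two_mul_add_two_le_nth_of_threshold_eq_zero {n : ℕ} {ω : Finset ℕ} (hω : ω ⊆ Icc 1 n)
    (h2k : 2 * #ω ≤ n) (h : threshold n ω = 0) {j : ℕ} (hj : j < #ω) :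
    2 * j + 2 ≤ Nat.nth (· ∈ ω) j := by
  have h0 : 0 ∉ ω := fun h0 => by simpa using hω h0
  by_contra! hy
  have hdens : j + 1 ≤ dens ω (j + 1) := by
    rw [dens_eq_count h0]
    calc j + 1 = Nat.count (· ∈ ω) (Nat.nth (· ∈ ω) j + 1) :=
          (Nat.count_nth_succ fun hf => (card_toFinset_ofPred_mem ω hf).symm ▸ hj).symm
      _ ≤ _ := Nat.count_monotone _ (by omega)
  have := dens_lt_of_threshold_eq_zero h (i := j + 1) (by omega) (by omega)
  omega

lemma nth_compl_lt_nth {n : ℕ} {ω : Finset ℕ} (hω : ω ⊆ Icc 1 n) {j : ℕ} (hj : j < #ω)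
    (hy : 2 * j + 2 ≤ Nat.nth (· ∈ ω) j) :
    Nat.nth (· ∈ Icc 1 n \ ω) j < Nat.nth (· ∈ ω) j := by
  set y := Nat.nth (· ∈ ω) j
  apply Nat.nth_lt_of_lt_count
  have hyn : y ≤ n := (mem_Icc.1 (hω (nth_mem_finset ω hj))).2
  -- only `j` of the `y - 1` values below `y` lie in `ω`
  have hcover : Icc 1 (y - 1) ⊆ (Icc 1 n \ ω).filter (· < y) ∪ ω.filter (· < y) := by
    intro x hx
    simp only [mem_Icc, mem_union, mem_filter, mem_sdiff] at hx ⊢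
    by_cases x ∈ ω <;> grind
  have := (card_le_card hcover).trans (card_union_le _ _)
  rw [← count_mem_eq_card_filter_lt, ← count_mem_eq_card_filter_lt, count_nth_finset ω hj,
    Nat.card_Icc] at this
  omega

lemma isTableau_nth {n k : ℕ} {ω : Finset ℕ} (hω : ω ⊆ Icc 1 n) (hk : #ω = k) :
    IsTableau n k (Nat.nth (· ∈ Icc 1 n \ ω)) (fun j : Fin k => Nat.nth (· ∈ ω) j) := by
  have hC : #(Icc 1 n \ ω) = n - k := by
    rw [card_sdiff_of_subset hω, Nat.card_Icc, hk]; rfl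
  refine ⟨by rw [← hC]; exact injOn_nth_finset _, fun j j' h => Fin.ext ?_,
    fun j j' hj' h => ?_, ?_⟩
  · exact injOn_nth_finset ω (by simp [hk]) (by simp [hk]) h
  · have h₁ := nth_mem_finset (Icc 1 n \ ω) (hj'.trans_eq hC.symm)
    have h₂ := nth_mem_finset ω (j.isLt.trans_eq hk.symm)
    simp_all
  · rw [← hC, image_nth_range_card, image_nth_univ_fin ω hk, sdiff_union_of_subset hω]

/-! ### Spanning -/

def swappedRow {k : ℕ} (a : ℕ → ℕ) (b : Fin k → ℕ) (ε : Finset (Fin k)) : Finset ℕ :=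
  univ.image fun j => if j ∈ ε then a j else b j

lemma polytabloid_eq_sum (F : Type) [Field F] {k : ℕ} (a : ℕ → ℕ) (b : Fin k → ℕ) :
    polytabloid F k a b = ∑ ε, (-1 : F) ^ #ε • Finsupp.single (swappedRow a b ε) 1 :=
  rfl

@[simp]
lemma swappedRow_empty {k : ℕ} (a : ℕ → ℕ) (b : Fin k → ℕ) :
    swappedRow a b ∅ = univ.image b := by
  simp [swappedRow]

namespace IsTableau

variable {n k : ℕ} {a : ℕ → ℕ} {b : Fin k → ℕ}

lemma injective_ite (h2k : 2 * k ≤ n) (ht : IsTableau n k a b) (ε : Finset (Fin k)) :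
    Function.Injective fun j : Fin k => if j ∈ ε then a j else b j := by
  obtain ⟨ha, hb, hab, -⟩ := ht
  have hlt (j : Fin k) : (j : ℕ) < n - k := by omega
  intro j j' h
  simp only at h
  split_ifs at h
  · exact Fin.ext (ha (hlt j) (hlt j') h)
  · exact absurd h.symm (hab j' j (hlt j))
  · exact absurd h (hab j j' (hlt j'))
  · exact hb h

lemma swappedRow_mem_powersetCard (h2k : 2 * k ≤ n) (ht : IsTableau n k a b)
    (ε : Finset (Fin k)) : swappedRow a b ε ∈ powersetCard k (Icc 1 n) := by
  refine mem_powersetCard.2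
    ⟨?_, by simp [swappedRow, card_image_of_injective _ (ht.injective_ite h2k ε)]⟩
  rw [← ht.2.2.2]
  intro x hx
  obtain ⟨j, -, rfl⟩ := mem_image.1 hx
  split_ifs
  · exact mem_union_left _ (mem_image_of_mem _ (mem_range.2 (by omega)))
  · exact mem_union_right _ (mem_image_of_mem _ (mem_univ j))

lemma sum_swappedRow_lt (h2k : 2 * k ≤ n) (ht : IsTableau n k a b)
    (hab : ∀ j : Fin k, a j < b j) {ε : Finset (Fin k)} (hε : ε.Nonempty) :
    (swappedRow a b ε).sum id < (univ.image b).sum id := by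
  rw [swappedRow, sum_image fun j _ j' _ h => ht.injective_ite h2k ε h,
    sum_image fun j _ j' _ h => ht.2.1 h]
  obtain ⟨j, hj⟩ := hε
  refine sum_lt_sum (fun i _ => ?_) ⟨j, mem_univ j, by simp [hj, hab j]⟩
  split_ifs
  · exact (hab i).le
  · exact le_rfl

end IsTableau

section Submodules

variable (F : Type) [Field F] (n k : ℕ)

noncomputable def subsetsSpan : Submodule F (Finset ℕ →₀ F) :=
  Submodule.span F {x : Finset ℕ →₀ F | ∃ ω : Finset ℕ,
    ω ⊆ Finset.Icc 1 n ∧ ω.card = k ∧ x = Finsupp.single ω 1}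

noncomputable def positiveThresholdSpan : Submodule F (Finset ℕ →₀ F) :=
  Submodule.span F {x : Finset ℕ →₀ F | ∃ ω : Finset ℕ,
    ω ⊆ Finset.Icc 1 n ∧ ω.card = k ∧ 0 < threshold n ω ∧ x = Finsupp.single ω 1}

noncomputable def spechtSpan : Submodule F (Finset ℕ →₀ F) :=
  Submodule.span F {x : Finset ℕ →₀ F | ∃ a b,
    IsTableau n k a b ∧ x = polytabloid F k a b}

end Submodules

variable {F : Type} [Field F] {n k : ℕ}

lemma IsTableau.polytabloid_sub_single_mem_span {a : ℕ → ℕ} {b : Fin k → ℕ}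
    (h2k : 2 * k ≤ n) (ht : IsTableau n k a b) (hab : ∀ j : Fin k, a j < b j) :
    polytabloid F k a b - Finsupp.single (univ.image b) 1 ∈ Submodule.span F
      ((fun T => Finsupp.single T 1) ''
        {T | T ∈ powersetCard k (Icc 1 n) ∧ T.sum id < (univ.image b).sum id}) := by
  rw [polytabloid_eq_sum, ← add_sum_erase _ _ (mem_univ ∅), card_empty, pow_zero, one_smul,
    swappedRow_empty, add_sub_cancel_left]
  refine sum_mem fun ε hε =>
    Submodule.smul_mem _ _ (Submodule.subset_span ⟨_, ⟨?_, ?_⟩, rfl⟩)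
  · exact ht.swappedRow_mem_powersetCard h2k ε
  · exact ht.sum_swappedRow_lt h2k hab (nonempty_iff_ne_empty.2 (ne_of_mem_erase hε))

lemma single_mem_positiveThresholdSpan_sup_spechtSpan (h2k : 2 * k ≤ n) {ω : Finset ℕ}
    (hω : ω ∈ powersetCard k (Icc 1 n)) :
    Finsupp.single ω 1 ∈ positiveThresholdSpan F n k ⊔ spechtSpan F n k := by
  induction hs : ω.sum id using Nat.strong_induction_on generalizing ω with
  | _ s ih =>
  obtain ⟨hsub, hk⟩ := mem_powersetCard.1 hω
  rcases Nat.eq_zero_or_pos (threshold n ω) with h0 | hpos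
  · have hab (j : Fin k) : Nat.nth (· ∈ Icc 1 n \ ω) j < Nat.nth (· ∈ ω) j :=
      nth_compl_lt_nth hsub (hk ▸ j.2)
        (two_mul_add_two_le_nth_of_threshold_eq_zero hsub (hk ▸ h2k) h0 (hk ▸ j.2))
    have ht := isTableau_nth hsub hk
    have hlead := ht.polytabloid_sub_single_mem_span (F := F) h2k hab
    rw [image_nth_univ_fin ω hk, hs] at hlead
    rw [← sub_sub_cancel (polytabloid F k _ _) (Finsupp.single ω 1)]
    refine sub_mem (Submodule.mem_sup_right (Submodule.subset_span ⟨_, _, ht, rfl⟩)) ?_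
    refine Submodule.span_le.2 ?_ hlead
    rintro _ ⟨T, ⟨hT, hTs⟩, rfl⟩
    exact ih _ hTs hT rfl
  · exact Submodule.mem_sup_left (Submodule.subset_span ⟨ω, hsub, hk, hpos, rfl⟩)

lemma IsTableau.polytabloid_mem_subsetsSpan {a : ℕ → ℕ} {b : Fin k → ℕ}
    (h2k : 2 * k ≤ n) (ht : IsTableau n k a b) : polytabloid F k a b ∈ subsetsSpan F n k := by
  refine sum_mem fun ε _ => Submodule.smul_mem _ _ (Submodule.subset_span ?_)
  obtain ⟨hsub, hk⟩ := mem_powersetCard.1 (ht.swappedRow_mem_powersetCard h2k ε)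
  exact ⟨_, hsub, hk, rfl⟩

lemma positiveThresholdSpan_sup_spechtSpan (h2k : 2 * k ≤ n) :
    positiveThresholdSpan F n k ⊔ spechtSpan F n k = subsetsSpan F n k := by
  refine le_antisymm (sup_le (Submodule.span_mono ?_) (Submodule.span_le.2 ?_))
    (Submodule.span_le.2 ?_)
  · rintro _ ⟨ω, hsub, hk, -, rfl⟩
    exact ⟨ω, hsub, hk, rfl⟩
  · rintro _ ⟨a, b, ht, rfl⟩
    exact ht.polytabloid_mem_subsetsSpan h2k
  · rintro _ ⟨ω, hsub, hk, rfl⟩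
    exact single_mem_positiveThresholdSpan_sup_spechtSpan h2k (mem_powersetCard.2 ⟨hsub, hk⟩)

/-! ### Straightening -/

variable {R : Type*} [CommRing R]

noncomputable def monomialSupports (R : Type*) [CommRing R] :
    MvPolynomial ℕ R →ₗ[R] (Finset ℕ →₀ R) :=
  Finsupp.lmapDomain R R Finsupp.support ∘ₗ (AddMonoidAlgebra.coeffLinearEquiv R).toLinearMap

lemma monomialSupports_monomial (d : ℕ →₀ ℕ) (c : R) :
    monomialSupports R (monomial d c) = Finsupp.single d.support c := by
  simp [monomialSupports, monomial]

noncomputable def diffProd (R : Type*) [CommRing R] (M : Multiset (ℕ × ℕ)) :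
    MvPolynomial ℕ R :=
  (M.map fun e => X e.2 - X e.1).prod

@[simp]
lemma diffProd_cons (e : ℕ × ℕ) (M : Multiset (ℕ × ℕ)) :
    diffProd R (e ::ₘ M) = (X e.2 - X e.1) * diffProd R M := by
  simp [diffProd]

lemma prod_X_eq_monomial {ι : Type} (s : Finset ι) (c : ι → ℕ) :
    ∏ j ∈ s, (X (c j) : MvPolynomial ℕ R) =
      monomial (∑ j ∈ s, Finsupp.single (c j) 1) 1 := by
  rw [monomial_sum_one]
  rfl

lemma support_sum_single_one {ι : Type} (s : Finset ι) (c : ι → ℕ) :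
    (∑ j ∈ s, Finsupp.single (c j) 1).support = s.image c := by
  ext
  simp [Finsupp.finsetSum_apply, Finsupp.single_apply]

lemma prod_neg_X_mul_prod_X {k : ℕ} (ε : Finset (Fin k)) (a b : Fin k → ℕ) :
    (∏ j ∈ ε, -X (a j)) * ∏ j ∈ univ \ ε, X (b j) =
      (-1 : R) ^ #ε • ∏ j, (X (if j ∈ ε then a j else b j) : MvPolynomial ℕ R) := by
  simp only [apply_ite X, prod_ite, prod_neg, filter_mem_eq_inter, univ_inter, filter_not,
    smul_eq_C_mul, map_pow, map_neg, map_one, mul_assoc]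

lemma polytabloid_eq_monomialSupports_diffProd (a : ℕ → ℕ) (b : Fin k → ℕ) :
    polytabloid F k a b =
      monomialSupports F (diffProd F (univ.val.map fun j : Fin k => (a j, b j))) := by
  have hdiff : diffProd F (univ.val.map fun j : Fin k => (a j, b j)) =
      ∏ j : Fin k, (-X (a j) + X (b j)) := by
    rw [diffProd, Multiset.map_map, ← prod_eq_multiset_prod]
    exact prod_congr rfl fun j _ => (neg_add_eq_sub _ _).symm
  rw [hdiff, prod_add, powerset_univ, map_sum, polytabloid_eq_sum]
  refine sum_congr rfl fun ε _ => ?_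
  rw [prod_neg_X_mul_prod_X, map_smul, prod_X_eq_monomial, monomialSupports_monomial,
    support_sum_single_one]
  simp only [Finsupp.smul_single, smul_eq_mul, mul_one]
  rfl

def pairEntries (M : Multiset (ℕ × ℕ)) : Multiset ℕ :=
  M.map Prod.fst + M.map Prod.snd

@[simp]
lemma pairEntries_cons (e : ℕ × ℕ) (M : Multiset (ℕ × ℕ)) :
    pairEntries (e ::ₘ M) = e.1 ::ₘ e.2 ::ₘ pairEntries M := by
  simp [pairEntries, Multiset.cons_add, Multiset.add_cons, Multiset.cons_swap]

lemma fst_mem_pairEntries {e : ℕ × ℕ} {M : Multiset (ℕ × ℕ)} (he : e ∈ M) :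
    e.1 ∈ pairEntries M :=
  Multiset.mem_add.2 (.inl (Multiset.mem_map_of_mem _ he))

structure IsMatching (n : ℕ) (M : Multiset (ℕ × ℕ)) : Prop where
  nodup_pairEntries : (pairEntries M).Nodup
  entry_mem_Icc : ∀ v ∈ pairEntries M, v ∈ Icc 1 n
  fst_lt_snd : ∀ e ∈ M, e.1 < e.2

lemma isMatching_cons {n : ℕ} {e : ℕ × ℕ} {M : Multiset (ℕ × ℕ)} :
    IsMatching n (e ::ₘ M) ↔ IsMatching n M ∧ e.1 < e.2 ∧ e.1 ∈ Icc 1 n ∧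
      e.2 ∈ Icc 1 n ∧ e.1 ∉ pairEntries M ∧ e.2 ∉ pairEntries M := by
  constructor
  · rintro ⟨hd, hI, hlt⟩
    simp only [pairEntries_cons, Multiset.nodup_cons, Multiset.mem_cons, not_or,
      forall_eq_or_imp] at hd hI hlt
    exact ⟨⟨hd.2.2, hI.2.2, hlt.2⟩, hlt.1, hI.1, hI.2.1, hd.1.2, hd.2.1⟩
  · rintro ⟨⟨hd, hI, hlt⟩, h, h1, h2, h1', h2'⟩
    refine ⟨?_, ?_, ?_⟩
    · simp only [pairEntries_cons, Multiset.nodup_cons, Multiset.mem_cons, not_or]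
      exact ⟨⟨h.ne, h1'⟩, h2', hd⟩
    · simp only [pairEntries_cons, Multiset.mem_cons, forall_eq_or_imp]
      exact ⟨h1, h2, hI⟩
    · simpa [h] using hlt

def sortPair (e : ℕ × ℕ) : ℕ × ℕ :=
  (min e.1 e.2, max e.1 e.2)

lemma pairEntries_map_sortPair (M : Multiset (ℕ × ℕ)) :
    pairEntries (M.map sortPair) = pairEntries M := by
  induction M using Multiset.induction_on with
  | empty => rfl
  | cons e M ih =>
    rw [Multiset.map_cons, pairEntries_cons, pairEntries_cons, ih]
    rcases le_total e.1 e.2 with h | h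
    · simp [sortPair, h]
    · simp [sortPair, h, Multiset.cons_swap]

lemma exists_diffProd_eq_smul_diffProd_map_sortPair (M : Multiset (ℕ × ℕ)) :
    ∃ c : R, diffProd R M = c • diffProd R (M.map sortPair) := by
  induction M using Multiset.induction_on with
  | empty => exact ⟨1, by simp [diffProd]⟩
  | cons e M ih =>
    obtain ⟨c, hc⟩ := ih
    rcases le_total e.1 e.2 with h | h
    · exact ⟨c, by simp [sortPair, h, hc]⟩
    · refine ⟨-c, ?_⟩
      rw [Multiset.map_cons, diffProd_cons, diffProd_cons, hc, sortPair, min_eq_right h,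
        max_eq_left h]
      simp only [mul_smul_comm, neg_smul, ← smul_neg, ← neg_mul, neg_sub]

lemma isMatching_map_sortPair {M : Multiset (ℕ × ℕ)} (hd : (pairEntries M).Nodup)
    (hI : ∀ v ∈ pairEntries M, v ∈ Icc 1 n) : IsMatching n (M.map sortPair) := by
  have hE := (pairEntries_map_sortPair M).symm
  refine ⟨hE ▸ hd, hE ▸ hI, ?_⟩
  simp only [Multiset.mem_map]
  rintro _ ⟨e, he, rfl⟩
  have hne : e.1 ≠ e.2 := fun h => Multiset.disjoint_left.1 (Multiset.nodup_add.1 hd).2.2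
    (Multiset.mem_map_of_mem _ he) (h ▸ Multiset.mem_map_of_mem Prod.snd he)
  simp only [sortPair]
  omega

lemma IsTableau.isMatching_map_sortPair {a : ℕ → ℕ} {b : Fin k → ℕ} (h2k : 2 * k ≤ n)
    (ht : IsTableau n k a b) :
    IsMatching n ((univ.val.map fun j : Fin k => (a j, b j)).map sortPair) := by
  obtain ⟨ha, hb, hab, hunion⟩ := ht
  have hlt (j : Fin k) : (j : ℕ) < n - k := by omega
  apply _root_.isMatching_map_sortPair
  · simp only [pairEntries, Multiset.map_map, Function.comp_def]
    refine Multiset.nodup_add.2 ⟨univ.nodup.map fun j j' h => Fin.ext (ha (hlt j) (hlt j') h),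
      univ.nodup.map hb, Multiset.disjoint_left.2 fun hv hv' => ?_⟩
    obtain ⟨j', -, rfl⟩ := Multiset.mem_map.1 hv
    obtain ⟨j, -, h⟩ := Multiset.mem_map.1 hv'
    exact hab j j' (hlt j') h
  · intro v hv
    rw [← hunion]
    simp only [pairEntries, Multiset.map_map, Function.comp_def, Multiset.mem_add,
      Multiset.mem_map] at hv
    obtain ⟨j, -, rfl⟩ | ⟨j, -, rfl⟩ := hv
    · exact mem_union_left _ (mem_image_of_mem _ (mem_range.2 (hlt j)))
    · exact mem_union_right _ (mem_image_of_mem _ (mem_univ j))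

/-- The matchings to which neither straightening move applies. -/
structure IsStandard (n : ℕ) (M : Multiset (ℕ × ℕ)) : Prop where
  fst_le_of_notMem : ∀ z ∈ Icc 1 n, z ∉ pairEntries M → ∀ e ∈ M, e.1 ≤ z
  snd_le_snd_of_fst_lt : ∀ e ∈ M, ∀ f ∈ M, e.1 < f.1 → e.2 ≤ f.2

/-- Both moves decrease this lexicographic weight. The gap move lowers the sum of second entries
or keeps it and lowers the sum of first entries; the nesting move lowers the sum of second
entries or keeps both sums and lowers the sum of squared differences. -/
def straighteningWeight (M : Multiset (ℕ × ℕ)) : ℕ ×ₗ ℕ ×ₗ ℕ :=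
  toLex ((M.map Prod.snd).sum, toLex ((M.map Prod.fst).sum, (M.map fun e => (e.2 - e.1) ^ 2).sum))

def Precedes (n : ℕ) (M' M : Multiset (ℕ × ℕ)) : Prop :=
  IsMatching n M' ∧ M'.card = M.card ∧ straighteningWeight M' < straighteningWeight M

lemma diffProd_cons_eq_sub (x y z : ℕ) (M : Multiset (ℕ × ℕ)) :
    diffProd R ((x, y) ::ₘ M) = diffProd R ((z, y) ::ₘ M) - diffProd R ((z, x) ::ₘ M) := by
  simp only [diffProd_cons]
  ring

lemma diffProd_cons_cons_eq_sub (a b c d : ℕ) (M : Multiset (ℕ × ℕ)) :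
    diffProd R ((a, d) ::ₘ (b, c) ::ₘ M) =
      diffProd R ((a, c) ::ₘ (b, d) ::ₘ M) - diffProd R ((a, b) ::ₘ (c, d) ::ₘ M) := by
  simp only [diffProd_cons]
  ring

lemma precedes_of_gap {x y z : ℕ} {M : Multiset (ℕ × ℕ)}
    (hM : IsMatching n ((x, y) ::ₘ M)) (hz : z ∈ Icc 1 n)
    (hzM : z ∉ pairEntries ((x, y) ::ₘ M)) (hzx : z < x) :
    Precedes n ((z, y) ::ₘ M) ((x, y) ::ₘ M) ∧
      Precedes n ((z, x) ::ₘ M) ((x, y) ::ₘ M) := by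
  simp only [isMatching_cons, pairEntries_cons, Multiset.mem_cons, not_or, mem_Icc] at hM hzM hz
  simp only [Precedes, isMatching_cons, mem_Icc, straighteningWeight, Multiset.map_cons,
    Multiset.sum_cons, Multiset.card_cons, Prod.Lex.toLex_lt_toLex]
  refine ⟨⟨⟨hM.1, ?_⟩, trivial, ?_⟩, ⟨hM.1, ?_⟩, trivial, ?_⟩ <;> grind

lemma sq_sub_add_sq_sub_lt {a b c d : ℕ} (hab : a < b) (hbc : b < c) (hcd : c < d) :
    (c - a) ^ 2 + (d - b) ^ 2 < (d - a) ^ 2 + (c - b) ^ 2 := by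
  zify [hab.le, hbc.le, hcd.le, (hab.trans hbc).le, (hbc.trans hcd).le,
    (hab.trans (hbc.trans hcd)).le]
  nlinarith

lemma precedes_of_nesting {a b c d : ℕ} {M : Multiset (ℕ × ℕ)}
    (hM : IsMatching n ((a, d) ::ₘ (b, c) ::ₘ M)) (hab : a < b) (hcd : c < d) :
    Precedes n ((a, c) ::ₘ (b, d) ::ₘ M) ((a, d) ::ₘ (b, c) ::ₘ M) ∧
      Precedes n ((a, b) ::ₘ (c, d) ::ₘ M) ((a, d) ::ₘ (b, c) ::ₘ M) := by
  simp only [isMatching_cons, pairEntries_cons, Multiset.mem_cons, not_or, mem_Icc] at hM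
  have := sq_sub_add_sq_sub_lt hab hM.1.2.1 hcd
  simp only [Precedes, isMatching_cons, pairEntries_cons, Multiset.mem_cons, not_or, mem_Icc,
    straighteningWeight, Multiset.map_cons, Multiset.sum_cons, Multiset.card_cons,
    Prod.Lex.toLex_lt_toLex]
  refine ⟨⟨⟨⟨hM.1.1, ?_⟩, ?_⟩, trivial, ?_⟩, ⟨⟨hM.1.1, ?_⟩, ?_⟩, trivial, ?_⟩ <;>
    grind

lemma exists_diffProd_eq_sub_of_not_isStandard {M : Multiset (ℕ × ℕ)} (hM : IsMatching n M)
    (hS : ¬IsStandard n M) :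
    ∃ M₁ M₂, Precedes n M₁ M ∧ Precedes n M₂ M ∧
      diffProd R M = diffProd R M₁ - diffProd R M₂ := by
  by_cases hgap : ∃ z ∈ Icc 1 n, z ∉ pairEntries M ∧ ∃ e ∈ M, z < e.1
  · obtain ⟨z, hz, hzM, ⟨x, y⟩, he, hzx⟩ := hgap
    obtain ⟨M', rfl⟩ := Multiset.exists_cons_of_mem he
    obtain ⟨h₁, h₂⟩ := precedes_of_gap hM hz hzM hzx
    exact ⟨_, _, h₁, h₂, diffProd_cons_eq_sub x y z M'⟩
  · obtain ⟨⟨a, d⟩, he, ⟨b, c⟩, hf, hab, hcd⟩ :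
        ∃ e ∈ M, ∃ f ∈ M, e.1 < f.1 ∧ f.2 < e.2 := by
      by_contra! hnest
      push Not at hgap
      exact hS ⟨hgap, hnest⟩
    obtain ⟨M', rfl⟩ := Multiset.exists_cons_of_mem he
    obtain ⟨M'', rfl⟩ := Multiset.exists_cons_of_mem
      ((Multiset.mem_cons.1 hf).resolve_left fun h => by simp_all)
    obtain ⟨h₁, h₂⟩ := precedes_of_nesting hM hab hcd
    exact ⟨_, _, h₁, h₂, diffProd_cons_cons_eq_sub a b c d M''⟩

def standardMatchings (n k : ℕ) : Set (Multiset (ℕ × ℕ)) :=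
  {M | IsMatching n M ∧ IsStandard n M ∧ M.card = k}

theorem diffProd_mem_span_standardMatchings {M : Multiset (ℕ × ℕ)} (hM : IsMatching n M)
    (hk : M.card = k) :
    diffProd R M ∈ Submodule.span R (diffProd R '' standardMatchings n k) := by
  induction M using (InvImage.wf straighteningWeight wellFounded_lt).induction with
  | _ M ih =>
  by_cases hS : IsStandard n M
  · exact Submodule.subset_span ⟨M, ⟨hM, hS, hk⟩, rfl⟩
  obtain ⟨M₁, M₂, ⟨h₁, hc₁, hw₁⟩, ⟨h₂, hc₂, hw₂⟩, hdiff⟩ :=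
    exists_diffProd_eq_sub_of_not_isStandard (R := R) hM hS
  rw [hdiff]
  exact sub_mem (ih M₁ hw₁ h₁ (hc₁.trans hk)) (ih M₂ hw₂ h₂ (hc₂.trans hk))

/-! ### Standard matchings are determined by their second rows -/

def secondRow (M : Multiset (ℕ × ℕ)) : Finset ℕ :=
  (M.map Prod.snd).toFinset

lemma card_filter_toFinset_map_lt {α : Type} {M : Multiset α} {g : α → ℕ}
    (h : (M.map g).Nodup) (m : ℕ) :
    #((M.map g).toFinset.filter (· < m)) = (M.filter (g · < m)).card := by
  rw [← Multiset.toFinset_filter, Multiset.toFinset_card_of_nodup (h.filter _),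
    Multiset.filter_map, Multiset.card_map]
  rfl

namespace IsMatching

variable {M : Multiset (ℕ × ℕ)}

lemma nodup_map_fst (hM : IsMatching n M) : (M.map Prod.fst).Nodup :=
  (Multiset.nodup_add.1 hM.nodup_pairEntries).1

lemma nodup_map_snd (hM : IsMatching n M) : (M.map Prod.snd).Nodup :=
  (Multiset.nodup_add.1 hM.nodup_pairEntries).2.1

lemma card_secondRow (hM : IsMatching n M) : #(secondRow M) = M.card := by
  rw [secondRow, Multiset.toFinset_card_of_nodup hM.nodup_map_snd, Multiset.card_map]

lemma fst_mem_compl (hM : IsMatching n M) {e : ℕ × ℕ} (he : e ∈ M) :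
    e.1 ∈ Icc 1 n \ secondRow M := by
  refine mem_sdiff.2 ⟨hM.entry_mem_Icc _ (fst_mem_pairEntries he), ?_⟩
  rw [secondRow, Multiset.mem_toFinset]
  exact Multiset.disjoint_left.1 (Multiset.nodup_add.1 hM.nodup_pairEntries).2.2
    (Multiset.mem_map_of_mem _ he)

lemma secondRow_subset (hM : IsMatching n M) : secondRow M ⊆ Icc 1 n := fun v hv =>
  hM.entry_mem_Icc v (Multiset.mem_add.2 (.inr (Multiset.mem_toFinset.1 hv)))

lemma dens_secondRow_lt (hM : IsMatching n M) {i : ℕ} (hi : 1 ≤ i) :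
    dens (secondRow M) i < i := by
  set P := M.filter fun e => e.2 ∈ Icc 1 (2 * i - 1)
  have hdens : dens (secondRow M) i ≤ P.card := by
    calc dens (secondRow M) i ≤ #(P.map Prod.snd).toFinset := by
          refine card_le_card fun v hv => ?_
          obtain ⟨hvM, hvI⟩ := mem_inter.1 hv
          obtain ⟨e, he, rfl⟩ := Multiset.mem_map.1 (Multiset.mem_toFinset.1 hvM)
          exact Multiset.mem_toFinset.2
            (Multiset.mem_map_of_mem _ (Multiset.mem_filter.2 ⟨he, hvI⟩))
      _ ≤ P.card := (Multiset.toFinset_card_le _).trans (Multiset.card_map _ _).le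
  have hpairs : 2 * P.card ≤ 2 * i - 1 := by
    have hP : (pairEntries P).Nodup := Multiset.nodup_of_le
      (add_le_add (Multiset.map_le_map (Multiset.filter_le _ _))
        (Multiset.map_le_map (Multiset.filter_le _ _))) hM.nodup_pairEntries
    -- a pair with second entry in `[1, 2i - 1]` has both entries there
    calc 2 * P.card = #(pairEntries P).toFinset := by
          rw [Multiset.toFinset_card_of_nodup hP, pairEntries, Multiset.card_add, Multiset.card_map,
            Multiset.card_map, two_mul]
      _ ≤ #(Icc 1 (2 * i - 1)) := by
          refine card_le_card fun v hv => ?_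
          simp only [pairEntries, Multiset.mem_toFinset, Multiset.mem_add, Multiset.mem_map,
            Multiset.mem_filter, P] at hv
          obtain ⟨e, ⟨he, heI⟩, rfl⟩ | ⟨e, ⟨-, heI⟩, rfl⟩ := hv
          · have h1 := hM.entry_mem_Icc _ (fst_mem_pairEntries he)
            have h2 := hM.fst_lt_snd e he
            rw [mem_Icc] at h1 heI ⊢
            omega
          · exact heI
      _ = 2 * i - 1 := by simp
  omega

lemma threshold_secondRow (hM : IsMatching n M) : threshold n (secondRow M) = 0 :=
  threshold_eq_zero_iff.2 fun _ hi _ => (hM.dens_secondRow_lt hi).ne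

end IsMatching

lemma IsStandard.count_compl_fst {M : Multiset (ℕ × ℕ)} (hM : IsMatching n M)
    (hS : IsStandard n M) {e : ℕ × ℕ} (he : e ∈ M) :
    Nat.count (· ∈ Icc 1 n \ secondRow M) e.1 = Nat.count (· ∈ secondRow M) e.2 := by
  -- Below `e.1`, the values outside the second row are the first entries (no gaps), and a pair
  -- has smaller first entry iff it has smaller second entry (no nesting).
  have hfirst : (Icc 1 n \ secondRow M).filter (· < e.1) =
      (M.map Prod.fst).toFinset.filter (· < e.1) := by
    ext z
    simp only [mem_filter, mem_sdiff, secondRow, Multiset.mem_toFinset]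
    constructor
    · rintro ⟨⟨hz, hzs⟩, hlt⟩
      refine ⟨?_, hlt⟩
      by_contra hzf
      have := hS.fst_le_of_notMem z hz (by simp [pairEntries, hzf, hzs]) e he
      omega
    · rintro ⟨hzf, hlt⟩
      obtain ⟨f, hf, rfl⟩ := Multiset.mem_map.1 hzf
      have := mem_sdiff.1 (hM.fst_mem_compl hf)
      rw [secondRow, Multiset.mem_toFinset] at this
      exact ⟨this, hlt⟩
  have hinj₁ := Multiset.inj_on_of_nodup_map hM.nodup_map_fst
  have hinj₂ := Multiset.inj_on_of_nodup_map hM.nodup_map_snd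
  have hfilter : M.filter (·.1 < e.1) = M.filter (·.2 < e.2) := by
    refine Multiset.filter_congr fun f hf => ⟨fun hlt => ?_, fun hlt => ?_⟩
    · refine (hS.snd_le_snd_of_fst_lt f hf e he hlt).lt_of_ne fun h => ?_
      rw [hinj₂ f hf e he h] at hlt
      exact lt_irrefl _ hlt
    · by_contra! hle
      rcases hle.lt_or_eq with hlt' | heq
      · exact (hS.snd_le_snd_of_fst_lt e he f hf hlt').not_gt hlt
      · rw [hinj₁ e he f hf heq] at hlt
        exact lt_irrefl _ hlt
  rw [count_mem_eq_card_filter_lt, count_mem_eq_card_filter_lt, hfirst, secondRow,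
    card_filter_toFinset_map_lt hM.nodup_map_fst, card_filter_toFinset_map_lt hM.nodup_map_snd]
  exact congrArg Multiset.card hfilter

lemma IsStandard.eq_of_secondRow_eq {M M' : Multiset (ℕ × ℕ)} (hM : IsMatching n M)
    (hS : IsStandard n M) (hM' : IsMatching n M') (hS' : IsStandard n M')
    (h : secondRow M = secondRow M') : M = M' := by
  refine Multiset.eq_of_le_of_card_le ((Multiset.le_iff_subset
    (Multiset.Nodup.of_map _ hM.nodup_map_fst)).2 fun e he => ?_)
    (by rw [← hM.card_secondRow, ← hM'.card_secondRow, h])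
  obtain ⟨e', he', hsnd⟩ : ∃ e' ∈ M', e'.2 = e.2 := by
    have : e.2 ∈ secondRow M' := h ▸ Multiset.mem_toFinset.2 (Multiset.mem_map_of_mem _ he)
    simpa [secondRow] using this
  have hfst : e'.1 = e.1 := by
    refine Nat.count_injective (hM'.fst_mem_compl he') (h ▸ hM.fst_mem_compl he) ?_
    rw [hS'.count_compl_fst hM' he', ← h, hsnd, ← hS.count_compl_fst hM he]
  exact Prod.ext hfst hsnd ▸ he'

/-! ### Dimension count -/

lemma spechtSpan_le_span_standardMatchings (h2k : 2 * k ≤ n) :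
    spechtSpan F n k ≤
      Submodule.span F ((monomialSupports F ∘ diffProd F) '' standardMatchings n k) := by
  refine Submodule.span_le.2 ?_
  rintro _ ⟨a, b, ht, rfl⟩
  obtain ⟨c, hc⟩ :=
    exists_diffProd_eq_smul_diffProd_map_sortPair (R := F)
      (univ.val.map fun j : Fin k => (a j, b j))
  rw [SetLike.mem_coe, polytabloid_eq_monomialSupports_diffProd, hc, map_smul, Set.image_comp]
  refine Submodule.smul_mem _ _ (Submodule.apply_mem_span_image_of_mem_span _ ?_)
  exact diffProd_mem_span_standardMatchings (ht.isMatching_map_sortPair h2k) (by simp)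

lemma secondRow_mapsTo_standardMatchings :
    Set.MapsTo secondRow (standardMatchings n k)
      ↑{ω ∈ powersetCard k (Icc 1 n) | threshold n ω = 0} := by
  rintro M ⟨hM, -, hk⟩
  simp [mem_powersetCard, hM.secondRow_subset, hM.card_secondRow, hk, hM.threshold_secondRow]

lemma secondRow_injOn_standardMatchings : Set.InjOn secondRow (standardMatchings n k) :=
  fun _ ⟨hM, hS, _⟩ _ ⟨hM', hS', _⟩ h => hS.eq_of_secondRow_eq hM hM' hS' h

lemma finite_standardMatchings : (standardMatchings n k).Finite :=
  Set.Finite.of_injOn secondRow_mapsTo_standardMatchings secondRow_injOn_standardMatchings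
    (finite_toSet _)

lemma finrank_span_image_le_ncard {K ι W : Type*} [DivisionRing K] [AddCommGroup W]
    [Module K W] {s : Set ι} (hs : s.Finite) (f : ι → W) :
    Module.finrank K (Submodule.span K (f '' s)) ≤ s.ncard := by
  have := (hs.image f).fintype
  calc _ ≤ (f '' s).toFinset.card := finrank_span_le_card _
    _ = (f '' s).ncard := (Set.ncard_eq_toFinset_card' _).symm
    _ ≤ s.ncard := Set.ncard_image_le hs

lemma finrank_spechtSpan_le (h2k : 2 * k ≤ n) :
    Module.finrank F (spechtSpan F n k) ≤
      #{ω ∈ powersetCard k (Icc 1 n) | threshold n ω = 0} := by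
  have hfin : (standardMatchings n k).Finite := finite_standardMatchings
  have := FiniteDimensional.span_of_finite F (hfin.image (monomialSupports F ∘ diffProd F))
  calc Module.finrank F (spechtSpan F n k)
      ≤ Module.finrank F
          (Submodule.span F ((monomialSupports F ∘ diffProd F) '' standardMatchings n k)) :=
        Submodule.finrank_mono (spechtSpan_le_span_standardMatchings h2k)
    _ ≤ (standardMatchings n k).ncard := finrank_span_image_le_ncard hfin _
    _ ≤ (↑{ω ∈ powersetCard k (Icc 1 n) | threshold n ω = 0} : Set (Finset ℕ)).ncard :=
        Set.ncard_le_ncard_of_injOn secondRow secondRow_mapsTo_standardMatchings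
          secondRow_injOn_standardMatchings (finite_toSet _)
    _ = _ := Set.ncard_coe_finset _

lemma finrank_positiveThresholdSpan_le :
    Module.finrank F (positiveThresholdSpan F n k) ≤
      #{ω ∈ powersetCard k (Icc 1 n) | 0 < threshold n ω} := by
  have : positiveThresholdSpan F n k = Submodule.span F ((fun ω => Finsupp.single ω 1) ''
      ↑{ω ∈ powersetCard k (Icc 1 n) | 0 < threshold n ω}) := by
    rw [positiveThresholdSpan]
    congr 1
    ext
    simp [mem_powersetCard, and_assoc, eq_comm]
  rw [this]
  exact (finrank_span_image_le_ncard (finite_toSet _) _).trans (Set.ncard_coe_finset _).le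

lemma subsetsSpan_eq_supported :
    subsetsSpan F n k = Finsupp.supported F F ↑(powersetCard k (Icc 1 n)) := by
  rw [Finsupp.supported_eq_span_single, subsetsSpan]
  congr 1
  ext
  simp [mem_powersetCard, and_assoc, eq_comm]

instance : FiniteDimensional F (subsetsSpan F n k) := by
  rw [subsetsSpan_eq_supported]
  exact (Finsupp.supportedEquivFinsupp _).symm.finiteDimensional

lemma finrank_subsetsSpan :
    Module.finrank F (subsetsSpan F n k) = #(powersetCard k (Icc 1 n)) := by
  rw [subsetsSpan_eq_supported, (Finsupp.supportedEquivFinsupp _).finrank_eq,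
    Module.finrank_finsupp_self]
  simp

lemma Submodule.inf_eq_bot_of_finrank_add_le {K W : Type*} [DivisionRing K] [AddCommGroup W]
    [Module K W] {A B V : Submodule K W} [FiniteDimensional K V] (hsup : A ⊔ B = V)
    (h : Module.finrank K A + Module.finrank K B ≤ Module.finrank K V) : A ⊓ B = ⊥ := by
  have := Submodule.finiteDimensional_of_le (hsup ▸ le_sup_left : A ≤ V)
  have := Submodule.finiteDimensional_of_le (hsup ▸ le_sup_right : B ≤ V)
  have := Submodule.finrank_sup_add_finrank_inf_eq A B
  rw [hsup] at this
  rw [← Submodule.finrank_eq_zero]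
  omega

lemma finrank_add_finrank_le_finrank_subsetsSpan (h2k : 2 * k ≤ n) :
    Module.finrank F (positiveThresholdSpan F n k) + Module.finrank F (spechtSpan F n k) ≤
      Module.finrank F (subsetsSpan F n k) := by
  calc _ ≤ #{ω ∈ powersetCard k (Icc 1 n) | 0 < threshold n ω} +
          #{ω ∈ powersetCard k (Icc 1 n) | ¬0 < threshold n ω} := by
        simp only [not_lt, nonpos_iff_eq_zero]
        exact add_le_add finrank_positiveThresholdSpan_le (finrank_spechtSpan_le h2k)
    _ = Module.finrank F (subsetsSpan F n k) := by
        rw [card_filter_add_card_filter_not, finrank_subsetsSpan]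

end

/-- for `2k ≤ n`, `FΩ_k` decomposes as a direct sum of `F`-vector
spaces `FΩ_k = FΩ_k^{>0} ⊕ S^{k,k}`, where `FΩ_k^{>0}` is spanned by the `k`-subsets
of positive threshold and `S^{k,k}` is spanned by all polytabloids. -/
theorem omega_decomposition (F : Type) [Field F] (n k : ℕ) (h2k : 2 * k ≤ n) :
    (Submodule.span F {x : Finset ℕ →₀ F | ∃ ω : Finset ℕ,
        ω ⊆ Finset.Icc 1 n ∧ ω.card = k ∧ 0 < threshold n ω ∧ x = Finsupp.single ω 1}
      ⊓ Submodule.span F {x : Finset ℕ →₀ F | ∃ a b,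
          IsTableau n k a b ∧ x = polytabloid F k a b} = ⊥) ∧
    (Submodule.span F {x : Finset ℕ →₀ F | ∃ ω : Finset ℕ,
        ω ⊆ Finset.Icc 1 n ∧ ω.card = k ∧ 0 < threshold n ω ∧ x = Finsupp.single ω 1}
      ⊔ Submodule.span F {x : Finset ℕ →₀ F | ∃ a b,
          IsTableau n k a b ∧ x = polytabloid F k a b}
      = Submodule.span F {x : Finset ℕ →₀ F | ∃ ω : Finset ℕ,
          ω ⊆ Finset.Icc 1 n ∧ ω.card = k ∧ x = Finsupp.single ω 1}) := by
  have hsup := positiveThresholdSpan_sup_spechtSpan (F := F) h2k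
  exact ⟨Submodule.inf_eq_bot_of_finrank_add_le hsup
    (finrank_add_finrank_le_finrank_subsetsSpan h2k), hsup⟩
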